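/- arXiv:2510.13523 — 2 statements merged into one kernel-verified Lean document; each statement's English description precedes it below -/
import Mathlib

section
/- The maps f_BC : P^sp_B(2n+1) → P^sp_C(2n), d ↦ (d⁻)_C, and f_CB : P^sp_C(2n) → P^sp_B(2n+1), d ↦ (d⁺)_B, are mutually inverse bijections: f_CB(f_BC(d)) = d for every d ∈ P^sp_B(2n+1), and f_BC(f_CB(d)) = d for every d ∈ P^sp_C(2n). -/
/-- A partition of `N`: a non-increasing list of positive naturals summing to `N`. -/
def IsPartition (N : ℕ) (l : List ℕ) : Prop :=
  l.Pairwise (· ≥ ·) ∧ (∀ p ∈ l, 0 < p) ∧ l.sum = N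

/-- Dominance order on partitions: `Dom p q` means `p ⪯ q`,
i.e. every initial partial sum of `p` is at most that of `q`. -/
def Dom (p q : List ℕ) : Prop :=
  ∀ j : ℕ, (p.take j).sum ≤ (q.take j).sum

/-- The height `h_d(s) = #{j : d_j ≥ s}`. -/
def height (l : List ℕ) (s : ℕ) : ℕ :=
  (l.filter (fun p => decide (s ≤ p))).length

/-- Membership in `P_ε(N)`: every part congruent to `ε` mod 2 occurs with even multiplicity. -/
def PEps (e : ℕ) (l : List ℕ) : Prop :=
  ∀ s ∈ l, s % 2 = e % 2 → Even (l.count s)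

/-- Membership in `P_{ε,ε'}(N)`: lies in `P_ε` and `h_d(s) ≡ ε'  (mod 2)` for every integer
`s ≥ 0` with `s ≡ ε (mod 2)` which is either `0` or a part of `d`. -/
def PEpsEps (e e' : ℕ) (l : List ℕ) : Prop :=
  PEps e l ∧
    ∀ s : ℕ, s % 2 = e % 2 → (s = 0 ∨ s ∈ l) → height l s % 2 = e' % 2

/-- `d⁺ = [d₁ + 1, d₂, …, d_k]`. -/
def dplus : List ℕ → List ℕ
  | [] => []
  | a :: rest => (a + 1) :: rest

/-- `d⁻ = [d₁, …, d_{k−1}, d_k − 1]`, the last entry removed if `d_k = 1`. -/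
def dminus (l : List ℕ) : List ℕ :=
  (l.dropLast ++ [l.getLastD 0 - 1]).filter (fun p => decide (0 < p))

/-- `IsCollapse e N l c` says that `c` is the collapse of `l` into `P_e`: the greatest
element, in the dominance order, of the set of partitions of `N` lying in `P_e` and
dominated by `l`. -/
def IsCollapse (e N : ℕ) (l c : List ℕ) : Prop :=
  IsPartition N c ∧ PEps e c ∧ Dom c l ∧
    ∀ m : List ℕ, IsPartition N m → PEps e m → Dom m l → Dom m c

/-!
Write `S_l(j)` for the sum of the first `j` parts of `l`, so that `p ⪯ q` means `S_p ≤ S_q`.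
For sorted `l` and any `s`, `S_l(h_l(s)) + (ε + 1) h_l(s)` is the sum of `x + ε + 1` over the
parts `x ≥ s`, so it is even when `l ∈ P_ε`: a parity condition at every corner of `l`.

Take `d ∈ P^sp_B(2n+1)`, `e = (d⁻)_C` and `f = (e⁺)_B`.

`d ⪯ f`: going through `d⁻` run by run one builds `ν ∈ P_C(2n)` with
`S_ν ≤ S_{d⁻} ≤ S_ν + 1`. Then `ν ⪯ e` by maximality of `e`, so `d ⪯ ν⁺ ⪯ e⁺`, and `d ⪯ f`
by maximality of `f`.

`f ⪯ d`: here `S_f ≤ S_e + 1` and `S_e ≤ S_d`. At the first `j` with `S_f(j) > S_d(j)` the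
partition `f` has a corner, and comparing its corner parity with that of `d` at the start of
the run of `d_j` shows that `d_j` is even and, by the height condition on `d`, that `S_e(j)` is
odd. As `e ∈ P_C` has even partial sums at its corners, `e` cannot drop while `S_e = S_d`
along the run of `d_j`, but `d` drops at its end.

The other composite is the same argument with the two parities exchanged.
-/

/-- `partialSum l j = S_l(j)`, so `Dom p q` unfolds to `∀ j, partialSum p j ≤ partialSum q j`.
Parts are indexed from `0`: the part `d_{i+1}` is `d.getD i 0`, which is `0` past the end. -/
def partialSum (l : List ℕ) (j : ℕ) : ℕ := (l.take j).sum

section PartialSums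

variable {l : List ℕ}

@[simp] lemma partialSum_zero (l : List ℕ) : partialSum l 0 = 0 := by simp [partialSum]

lemma partialSum_succ (l : List ℕ) (i : ℕ) :
    partialSum l (i + 1) = partialSum l i + l.getD i 0 := by
  rw [partialSum, List.take_add_one, List.sum_append, List.getD_eq_getElem?_getD]
  cases l[i]? <;> simp [partialSum]

lemma partialSum_one (l : List ℕ) : partialSum l 1 = l.getD 0 0 := by
  simp [partialSum_succ]

lemma partialSum_le_sum (l : List ℕ) (j : ℕ) : partialSum l j ≤ l.sum := by
  have := List.sum_take_add_sum_drop l j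
  unfold partialSum; omega

lemma partialSum_of_length_le {j : ℕ} (h : l.length ≤ j) : partialSum l j = l.sum := by
  rw [partialSum, List.take_of_length_le h]

lemma partialSum_append (l₁ l₂ : List ℕ) (j : ℕ) :
    partialSum (l₁ ++ l₂) j = partialSum l₁ j + partialSum l₂ (j - l₁.length) := by
  simp [partialSum, List.take_append]

lemma partialSum_replicate (m v j : ℕ) : partialSum (List.replicate m v) j = min j m * v := by
  simp [partialSum, List.take_replicate]

lemma partialSum_singleton (x j : ℕ) : partialSum [x] j = min j 1 * x :=
  partialSum_replicate 1 x j

lemma partialSum_add_of_getD_eq {a t v : ℕ} (hrun : ∀ k, a ≤ k → k < a + t → l.getD k 0 = v) :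
    partialSum l (a + t) = partialSum l a + t * v := by
  induction t with
  | zero => simp
  | succ t ih =>
    rw [← Nat.add_assoc, partialSum_succ, ih fun k hk hkt => hrun k hk (by omega),
      hrun (a + t) (by omega) (by omega)]
    ring

lemma getD_pos_iff (hl : ∀ x ∈ l, 0 < x) {i : ℕ} : 0 < l.getD i 0 ↔ i < l.length := by
  refine ⟨fun h => ?_, fun h => ?_⟩
  · by_contra hi
    rw [List.getD_eq_default _ _ (by omega)] at h
    omega
  · rw [List.getD_eq_getElem _ _ h]; exact hl _ (List.getElem_mem h)

lemma getD_mem_of_pos {i : ℕ} (h : 0 < l.getD i 0) : l.getD i 0 ∈ l := by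
  have hi : i < l.length := by
    by_contra hi; rw [List.getD_eq_default _ _ (by omega)] at h; omega
  rw [List.getD_eq_getElem _ _ hi]; exact List.getElem_mem hi

lemma partialSum_lt_sum (hl : ∀ x ∈ l, 0 < x) {j : ℕ} (hj : j < l.length) :
    partialSum l j < l.sum := by
  have := (getD_pos_iff hl).mpr hj
  have := partialSum_succ l j
  have := partialSum_le_sum l (j + 1)
  omega

lemma dom_antisymm {p q : List ℕ} (hp : ∀ x ∈ p, 0 < x) (hq : ∀ x ∈ q, 0 < x)
    (hpq : Dom p q) (hqp : Dom q p) : p = q := by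
  have hpart : ∀ i, p.getD i 0 = q.getD i 0 := fun i => by
    have := partialSum_succ p i; have := partialSum_succ q i
    have := hpq i; have := hqp i; have := hpq (i + 1); have := hqp (i + 1)
    unfold partialSum at *; omega
  have hlen : ∀ i, i < p.length ↔ i < q.length := fun i => by
    rw [← getD_pos_iff hp, ← getD_pos_iff hq, hpart]
  refine List.ext_getElem (by have := hlen p.length; have := hlen q.length; omega)
    fun i hi hi' => ?_
  have := hpart i
  rwa [List.getD_eq_getElem _ _ hi, List.getD_eq_getElem _ _ hi'] at this

end PartialSums

section Sorted

variable {l : List ℕ}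

lemma getD_antitone (hl : l.Pairwise (· ≥ ·)) {i j : ℕ} (hij : i ≤ j) :
    l.getD j 0 ≤ l.getD i 0 := by
  by_cases hj : j < l.length
  · rw [List.getD_eq_getElem _ _ hj, List.getD_eq_getElem _ _ (by omega)]
    rcases hij.lt_or_eq with hij | rfl
    · exact List.pairwise_iff_getElem.mp hl _ _ _ _ hij
    · rfl
  · rw [List.getD_eq_default _ _ (by omega)]; omega

lemma le_getD_zero (hl : l.Pairwise (· ≥ ·)) {x : ℕ} (hx : x ∈ l) : x ≤ l.getD 0 0 := by
  obtain ⟨k, hk, rfl⟩ := List.getElem_of_mem hx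
  rw [← List.getD_eq_getElem _ 0 hk]
  exact getD_antitone hl (Nat.zero_le k)

lemma getD_zero_lt_of_forall_lt {v : ℕ} (hv : 0 < v) (hlv : ∀ x ∈ l, x < v) :
    l.getD 0 0 < v := by
  cases l <;> simp_all

lemma filter_le_eq_nil_of_lt {a s : ℕ} {t : List ℕ} (hl : (a :: t).Pairwise (· ≥ ·))
    (has : a < s) : t.filter (fun p => decide (s ≤ p)) = [] := by
  rw [List.filter_eq_nil_iff]
  intro x hx
  have := List.rel_of_pairwise_cons hl hx
  simp only [decide_eq_true_eq]; omega

lemma height_cons (a : ℕ) (t : List ℕ) (s : ℕ) :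
    height (a :: t) s = height t s + if s ≤ a then 1 else 0 := by
  by_cases h : s ≤ a <;> simp [height, h]

lemma le_getD_iff_lt_height (hl : l.Pairwise (· ≥ ·)) {s : ℕ} (hs : 0 < s) {i : ℕ} :
    s ≤ l.getD i 0 ↔ i < height l s := by
  induction l generalizing i with
  | nil => simp [height]; omega
  | cons a t ih =>
    rw [height_cons]
    by_cases has : s ≤ a
    · rcases i with _ | i
      · simp [has]
      · simpa [has] using ih hl.of_cons
    · have h0 : height t s = 0 := by
        rw [height, filter_le_eq_nil_of_lt hl (by omega)]; rfl
      have := getD_antitone hl (Nat.zero_le i)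
      simp only [h0, has, if_false, List.getD_cons_zero] at this ⊢
      omega

lemma take_height (hl : l.Pairwise (· ≥ ·)) (s : ℕ) :
    l.take (height l s) = l.filter (fun p => decide (s ≤ p)) := by
  induction l with
  | nil => simp
  | cons a t ih =>
    rw [height_cons]
    by_cases has : s ≤ a
    · simp [has, ih hl.of_cons]
    · have h0 := filter_le_eq_nil_of_lt hl (Nat.lt_of_not_le has)
      simp [has, height, h0]

lemma height_eq_count_add (l : List ℕ) (v : ℕ) :
    height l v = l.count v + height l (v + 1) := by
  induction l with
  | nil => simp [height]
  | cons a t ih =>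
    rw [height_cons, height_cons, List.count_cons, ih]
    by_cases h : a = v
    · subst h; simp; omega
    · by_cases h' : v ≤ a
      · simp [h, h', show v + 1 ≤ a by omega]; omega
      · simp [h, h', show ¬ v + 1 ≤ a by omega]

lemma induction_on_runs {P : List ℕ → Prop} (nil : P [])
    (run : ∀ m v r, 0 < m → (∀ x ∈ r, x < v) → P r → P (List.replicate m v ++ r)) :
    ∀ l : List ℕ, l.Pairwise (· ≥ ·) → P l := by
  suffices h : ∀ l k v, (List.replicate k v ++ l).Pairwise (· ≥ ·) →
      P (List.replicate k v ++ l) from fun l hl => h l 0 0 hl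
  intro l
  induction l with
  | nil =>
    rintro (_ | k) v -
    · exact nil
    · simpa using run (k + 1) v [] k.succ_pos (by simp) nil
  | cons b t ih =>
    rintro (_ | k) v hl
    · simpa using ih 1 b (by simpa using hl)
    · have hb : b ≤ v := List.rel_of_pairwise_cons (R := (· ≥ ·))
        (by simpa only [List.replicate_succ, List.cons_append] using hl) (by simp)
      rcases hb.lt_or_eq with hb | rfl
      · have ht : (b :: t).Pairwise (· ≥ ·) := (List.pairwise_append.mp hl).2.1
        refine run (k + 1) v (b :: t) k.succ_pos (fun x hx => ?_) (by simpa using ih 1 b ht)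
        have := le_getD_zero ht hx
        simp only [List.getD_cons_zero] at this
        omega
      · simpa [List.replicate_succ'] using
          ih (k + 2) b (by simpa [List.replicate_succ'] using hl)

end Sorted

section PEps

variable {ε : ℕ} {l : List ℕ}

lemma PEps.append {l₁ l₂ : List ℕ} (h₁ : PEps ε l₁) (h₂ : PEps ε l₂) : PEps ε (l₁ ++ l₂) := by
  have even_count : ∀ {l : List ℕ}, PEps ε l → ∀ s, s % 2 = ε % 2 → Even (l.count s) :=
    fun {l} h s hs => if hsl : s ∈ l then h s hsl hs else by simp [List.count_eq_zero.mpr hsl]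
  intro s _ hs
  rw [List.count_append]
  exact (even_count h₁ s hs).add (even_count h₂ s hs)

lemma pEps_replicate {m v : ℕ} (h : v % 2 = ε % 2 → Even m) : PEps ε (List.replicate m v) := by
  intro s hs hsε
  obtain rfl := List.eq_of_mem_replicate hs
  simpa using h hsε

lemma PEps.filter (h : PEps ε l) (p : ℕ → Bool) : PEps ε (l.filter p) := by
  intro s hs hsε
  rw [List.count_filter (List.mem_filter.mp hs).2]
  exact h s (List.mem_of_mem_filter hs) hsε

/-- Each part `x ≢ ε` contributes an even summand `x + ε + 1`, and the parts `x ≡ ε` come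
in pairs. -/
lemma PEps.even_sum_map_add (h : PEps ε l) : Even (l.map (· + (ε + 1))).sum := by
  classical
  rw [← Multiset.sum_coe, ← Multiset.map_coe, Finset.sum_multiset_map_count]
  refine Finset.even_sum _ fun s hs => ?_
  rw [Multiset.coe_count, smul_eq_mul]
  by_cases hsε : s % 2 = ε % 2
  · exact (h s (by simpa using hs) hsε).mul_right _
  · exact Even.mul_left (Nat.even_iff.mpr (by omega)) _

lemma PEps.even_partialSum_height (hl : l.Pairwise (· ≥ ·)) (h : PEps ε l) (s : ℕ) :
    Even (partialSum l (height l s) + (ε + 1) * height l s) := by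
  have key := (h.filter (fun p => decide (s ≤ p))).even_sum_map_add
  rw [List.sum_map_add, List.map_id', List.map_const', List.sum_replicate, smul_eq_mul] at key
  rw [partialSum, take_height hl, mul_comm]
  exact key

lemma PEps.even_partialSum_of_getD_lt (hl : l.Pairwise (· ≥ ·)) (h : PEps ε l) {i : ℕ}
    (hi : l.getD (i + 1) 0 < l.getD i 0) :
    Even (partialSum l (i + 1) + (ε + 1) * (i + 1)) := by
  have hh : height l (l.getD i 0) = i + 1 := by
    have h1 := (le_getD_iff_lt_height hl (s := l.getD i 0) (by omega)).mp le_rfl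
    have h2 : ¬ i + 1 < height l (l.getD i 0) := fun h' =>
      absurd ((le_getD_iff_lt_height hl (by omega)).mpr h') (by omega)
    omega
  simpa only [hh] using h.even_partialSum_height hl (l.getD i 0)

/-- The run of `v = l_{i+1}` starts after `a = h_l(v + 1)` parts, where the corner parity
holds, and adds `v + ε + 1` to the parity count for each of its parts up to `i + 1`. -/
lemma PEps.parity_of_odd_partialSum (hl : l.Pairwise (· ≥ ·)) (h : PEps ε l) {i : ℕ}
    (hv : 0 < l.getD i 0) (hodd : Odd (partialSum l (i + 1) + (ε + 1) * (i + 1))) :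
    l.getD i 0 % 2 = ε % 2 ∧ Odd (i + 1 - height l (l.getD i 0 + 1)) := by
  set v := l.getD i 0
  set a := height l (v + 1)
  have ha : a ≤ i := not_lt.mp fun h => by
    have := (le_getD_iff_lt_height hl (by omega)).mpr h; omega
  have hrun : partialSum l (a + (i + 1 - a)) = partialSum l a + (i + 1 - a) * v :=
    partialSum_add_of_getD_eq fun k hak hk => le_antisymm
      (not_lt.mp fun h => by
        have := (le_getD_iff_lt_height hl (s := v + 1) (by omega)).mp h; omega)
      (getD_antitone hl (by omega))
  have hcorner : Even (partialSum l a + (ε + 1) * a) := h.even_partialSum_height hl (v + 1)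
  have hsplit : partialSum l (i + 1) + (ε + 1) * (i + 1) =
      partialSum l a + (ε + 1) * a + (i + 1 - a) * (v + (ε + 1)) := by
    rw [show a + (i + 1 - a) = i + 1 by omega] at hrun
    rw [hrun, show (ε + 1) * (i + 1) = (ε + 1) * a + (ε + 1) * (i + 1 - a) by
      rw [← mul_add]; congr 1; omega]
    ring
  rw [hsplit] at hodd
  obtain ⟨hrun_odd, hv_odd⟩ := Nat.odd_mul.mp ((Nat.odd_add'.mp hodd).mpr hcorner)
  exact ⟨by rw [Nat.odd_iff] at hv_odd; omega, hrun_odd⟩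

end PEps

/-- The clause on the first part is the invariant that keeps the run-by-run construction of
`exists_approxPEps` sorted. -/
def ApproxPEps (ε a : ℕ) (μ ν : List ℕ) : Prop :=
  IsPartition (μ.sum + a) ν ∧ PEps ε ν ∧
    (∀ j, partialSum ν j ≤ partialSum μ j + a ∧ partialSum μ j + a ≤ partialSum ν j + 1) ∧
    (μ.getD 0 0 % 2 ≠ ε % 2 → ν.getD 0 0 ≤ μ.getD 0 0) ∧
    (ε % 2 = 1 → ν.length ≤ μ.length)

section ApproxPEps

variable {ε a m v : ℕ} {μ ν : List ℕ}

lemma approxPEps_nil_nil (ε : ℕ) : ApproxPEps ε 0 [] [] := by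
  refine ⟨⟨by simp, by simp, by simp⟩, by simp [PEps], fun j => by simp, by simp, by simp⟩

lemma approxPEps_nil_one (hε : ε % 2 = 0) : ApproxPEps ε 1 [] [1] := by
  refine ⟨⟨by simp, by simp, by simp⟩, pEps_replicate (m := 1) (by omega), fun j => ?_,
    by simp; omega, by omega⟩
  rcases j with _ | j <;> simp [partialSum]

lemma ApproxPEps.le_of_mem (h : ApproxPEps ε a μ ν) {y : ℕ} (hy : y ∈ ν) :
    y ≤ μ.getD 0 0 + a := by
  have := (h.2.2.1 1).1
  rw [partialSum_one, partialSum_one] at this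
  exact (le_getD_zero h.1.1 hy).trans this

lemma ApproxPEps.append {a' : ℕ} {α β : List ℕ} (h : ApproxPEps ε a' μ ν)
    (hαs : α.Pairwise (· ≥ ·)) (hαp : ∀ x ∈ α, 0 < x) (hαε : PEps ε α)
    (hsum : α.sum + a' = β.sum + a) (hlen : α.length = β.length) (hβ : β ≠ [])
    (hbound : ∀ j ≤ β.length,
      partialSum α j ≤ partialSum β j + a ∧ partialSum β j + a ≤ partialSum α j + 1)
    (hsep : ∀ x ∈ α, ∀ y ∈ ν, y ≤ x)
    (hhead : β.getD 0 0 % 2 ≠ ε % 2 → α.getD 0 0 ≤ β.getD 0 0) :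
    ApproxPEps ε a (β ++ μ) (α ++ ν) := by
  obtain ⟨⟨hνs, hνp, hνsum⟩, hνε, hνbound, -, hνlen⟩ := h
  have hα : α ≠ [] := by rintro rfl; exact hβ (List.length_eq_zero_iff.mp hlen.symm)
  refine ⟨⟨List.pairwise_append.mpr ⟨hαs, hνs, hsep⟩, ?_, by simp; omega⟩, hαε.append hνε,
    fun j => ?_, ?_, fun hε => by simp; have := hνlen hε; omega⟩
  · intro x hx
    rcases List.mem_append.mp hx with hx | hx
    exacts [hαp x hx, hνp x hx]
  · rw [partialSum_append, partialSum_append]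
    by_cases hj : j ≤ β.length
    · simpa [hlen, Nat.sub_eq_zero_of_le hj] using hbound j hj
    · rw [partialSum_of_length_le (l := α) (by omega),
        partialSum_of_length_le (l := β) (by omega), hlen]
      have := hνbound (j - β.length)
      omega
  · obtain ⟨x, α, rfl⟩ := List.exists_cons_of_ne_nil hα
    obtain ⟨y, β, rfl⟩ := List.exists_cons_of_ne_nil hβ
    simpa using hhead

lemma ApproxPEps.replicate_append (h : ApproxPEps ε a μ ν) (ha : a ≤ 1) (hm : 0 < m)
    (hv : 0 < v) (hμv : ∀ x ∈ μ, x < v) (hrun : v % 2 = ε % 2 → Even m) :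
    ApproxPEps ε a (List.replicate m v ++ μ) (List.replicate m v ++ ν) := by
  have hμ₀ := getD_zero_lt_of_forall_lt hv hμv
  refine h.append (List.pairwise_replicate.mpr (Or.inr le_rfl))
    (fun x hx => by rwa [List.eq_of_mem_replicate hx]) (pEps_replicate hrun) rfl rfl
    (by simp; omega) (fun j _ => by omega) (fun x hx y hy => ?_) (fun _ => le_rfl)
  rw [List.eq_of_mem_replicate hx]
  have := h.le_of_mem hy
  omega

lemma ApproxPEps.replicate_append_lower (h : ApproxPEps ε 1 μ ν) (hm : Odd m) (hv : 2 ≤ v)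
    (hvε : v % 2 = ε % 2) (hμv : ∀ x ∈ μ, x < v) :
    ApproxPEps ε 0 (List.replicate m v ++ μ) (List.replicate (m - 1) v ++ [v - 1] ++ ν) := by
  obtain ⟨k, rfl⟩ := hm
  have hμ₀ := getD_zero_lt_of_forall_lt (by omega) hμv
  refine h.append ?_ ?_ ?_ ?_ (by simp) (by simp) (fun j hj => ?_) (fun x hx y hy => ?_)
    (fun h' => absurd (by simpa using hvε) h')
  · refine List.pairwise_append.mpr ⟨List.pairwise_replicate.mpr (Or.inr le_rfl),
      by simp, fun x hx y hy => ?_⟩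
    rw [List.eq_of_mem_replicate hx, List.eq_of_mem_singleton hy]; omega
  · intro x hx
    rcases List.mem_append.mp hx with hx | hx
    · rw [List.eq_of_mem_replicate hx]; omega
    · rw [List.eq_of_mem_singleton hx]; omega
  · exact (pEps_replicate fun _ => by simp).append (pEps_replicate (m := 1) (by omega))
  · simp [add_mul]; omega
  · simp only [List.length_replicate] at hj
    rw [partialSum_append, partialSum_replicate, partialSum_replicate, partialSum_singleton]
    simp only [List.length_replicate, Nat.add_sub_cancel]
    rcases Nat.lt_or_ge j (2 * k + 1) with hj' | hj'
    · simp [Nat.min_eq_left (by omega : j ≤ 2 * k), Nat.min_eq_left hj'.le,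
        Nat.sub_eq_zero_of_le (by omega : j ≤ 2 * k)]
    · obtain rfl : j = 2 * k + 1 := by omega
      simp [add_mul]; omega
  · have hx' : v - 1 ≤ x := by
      rcases List.mem_append.mp hx with hx | hx
      · rw [List.eq_of_mem_replicate hx]; omega
      · rw [List.eq_of_mem_singleton hx]
    have hy₀ := le_getD_zero h.1.1 hy
    have := h.le_of_mem hy
    have := h.2.2.2.1
    omega

lemma ApproxPEps.replicate_append_raise (h : ApproxPEps ε 0 μ ν) (hm : Odd m) (hv : 0 < v)
    (hvε : v % 2 = ε % 2) (hμv : ∀ x ∈ μ, x < v) :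
    ApproxPEps ε 1 (List.replicate m v ++ μ) ((v + 1) :: List.replicate (m - 1) v ++ ν) := by
  obtain ⟨k, rfl⟩ := hm
  have hμ₀ := getD_zero_lt_of_forall_lt hv hμv
  refine h.append ?_ ?_ ?_ ?_ (by simp) (by simp) (fun j hj => ?_) (fun x hx y hy => ?_)
    (fun h' => absurd (by simpa using hvε) h')
  · refine List.pairwise_cons.mpr ⟨fun x hx => ?_,
      List.pairwise_replicate.mpr (Or.inr le_rfl)⟩
    rw [List.eq_of_mem_replicate hx]; omega
  · intro x hx
    rcases List.mem_cons.mp hx with rfl | hx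
    · omega
    · rw [List.eq_of_mem_replicate hx]; omega
  · exact (pEps_replicate (m := 1) (v := v + 1) (by omega)).append
      (pEps_replicate fun _ => by simp)
  · simp [add_mul]; omega
  · simp only [List.length_replicate] at hj
    rw [show (v + 1) :: List.replicate (2 * k + 1 - 1) v = [v + 1] ++ List.replicate (2 * k) v
      by simp, partialSum_append, partialSum_replicate, partialSum_replicate, partialSum_singleton]
    rcases j with _ | j
    · simp
    · simp [Nat.min_eq_left (by omega : j ≤ 2 * k), Nat.min_eq_left hj, add_mul]; omega
  · have := h.le_of_mem hy
    rcases List.mem_cons.mp hx with rfl | hx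
    · omega
    · rw [List.eq_of_mem_replicate hx]; omega

end ApproxPEps

/-- Runs of `μ` are copied, except that a run `v^m` with `m` odd and `v ≡ ε` is turned into
`v^(m-1) (v-1)` or `(v+1) v^(m-1)`, which toggles between `a = 0` and `a = 1`. -/
theorem exists_approxPEps (ε : ℕ) {μ : List ℕ} (hμs : μ.Pairwise (· ≥ ·))
    (hμp : ∀ x ∈ μ, 0 < x) {a : ℕ} (ha : a ≤ 1) (hpar : ε % 2 = 1 → Even (μ.sum + a)) :
    ∃ ν, ApproxPEps ε a μ ν := by
  revert hμp a
  refine induction_on_runs (P := fun μ => (∀ x ∈ μ, 0 < x) → ∀ {a : ℕ}, a ≤ 1 →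
      (ε % 2 = 1 → Even (μ.sum + a)) → ∃ ν, ApproxPEps ε a μ ν)
    ?_ (fun m v r hm hrv ih hpos a ha hpar => ?_) μ hμs
  · intro _ a ha hpar
    rcases Nat.le_one_iff_eq_zero_or_eq_one.mp ha with rfl | rfl
    · exact ⟨[], approxPEps_nil_nil ε⟩
    · exact ⟨[1], approxPEps_nil_one (by have := mt hpar (by simp); omega)⟩
  have hv : 0 < v := hpos v (by simp; omega)
  have hrp : ∀ x ∈ r, 0 < x := fun x hx => hpos x (by simp [hx])
  have hsum : (List.replicate m v ++ r).sum + a = m * v + (r.sum + a) := by simp; ring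
  by_cases hgood : v % 2 = ε % 2 → Even m
  · have hmv : ε % 2 = 1 → Even (m * v) := fun hε => by
      by_cases hvε : v % 2 = ε % 2
      · exact (hgood hvε).mul_right v
      · exact (Nat.even_iff.mpr (by omega)).mul_left m
    obtain ⟨ν, hν⟩ := ih hrp ha fun hε => by
      have := hpar hε; rw [hsum] at this; exact (Nat.even_add.mp this).mp (hmv hε)
    exact ⟨_, hν.replicate_append ha hm hv hrv hgood⟩
  obtain ⟨hvε, hm_odd⟩ := Classical.not_imp.mp hgood
  rw [Nat.not_even_iff_odd] at hm_odd
  have hmv : ε % 2 = 1 → Odd (m * v) := fun hε => hm_odd.mul (Nat.odd_iff.mpr (by omega))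
  rcases Nat.le_one_iff_eq_zero_or_eq_one.mp ha with rfl | rfl
  · have hv2 : 2 ≤ v := by
      by_contra hv1
      have hr : r = [] := List.eq_nil_iff_forall_not_mem.mpr fun x hx => by
        have := hrp x hx; have := hrv x hx; omega
      have := hpar (by omega)
      simp [hr, show v = 1 by omega] at this
      exact Nat.not_even_iff_odd.mpr hm_odd this
    obtain ⟨ν, hν⟩ := ih hrp le_rfl fun hε => by
      have := hpar hε; rw [hsum] at this
      exact Nat.even_add_one.mpr fun h => Nat.not_even_iff_odd.mpr (hmv hε)
        ((Nat.even_add.mp this).mpr h)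
    exact ⟨_, hν.replicate_append_lower hm_odd hv2 hvε hrv⟩
  · obtain ⟨ν, hν⟩ := ih hrp (Nat.zero_le 1) fun hε => by
      have := hpar hε; rw [hsum] at this
      have hodd : ¬ Even (r.sum + 1) := fun h =>
        Nat.not_even_iff_odd.mpr (hmv hε) ((Nat.even_add.mp this).mpr h)
      simpa [Nat.even_add_one] using hodd
    exact ⟨_, hν.replicate_append_raise hm_odd hv hvε hrv⟩

section DplusDminus

variable {l : List ℕ}

lemma partialSum_dplus (hl : l ≠ []) {j : ℕ} (hj : 0 < j) :
    partialSum (dplus l) j = partialSum l j + 1 := by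
  obtain ⟨x, l, rfl⟩ := List.exists_cons_of_ne_nil hl
  obtain ⟨j, rfl⟩ := Nat.exists_eq_add_of_lt hj
  simp [dplus, partialSum]; omega

lemma partialSum_dplus_le (l : List ℕ) (j : ℕ) : partialSum (dplus l) j ≤ partialSum l j + 1 := by
  rcases eq_or_ne l [] with rfl | hl
  · simp [dplus, partialSum]
  rcases j.eq_zero_or_pos with rfl | hj
  · simp
  · exact (partialSum_dplus hl hj).le

lemma partialSum_dminus (hl : ∀ x ∈ l, 0 < x) (j : ℕ) :
    partialSum (dminus l) j = min (partialSum l j) (l.sum - 1) := by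
  rcases eq_or_ne l [] with rfl | hne
  · simp [dminus, partialSum]
  obtain ⟨l, w, rfl⟩ : ∃ l' w, l = l' ++ [w] :=
    ⟨l.dropLast, l.getLast hne, (List.dropLast_append_getLast hne).symm⟩
  have hw : 0 < w := hl w (by simp)
  have hl' : l.filter (fun p => decide (0 < p)) = l :=
    List.filter_eq_self.mpr fun x hx => by simpa using hl x (by simp [hx])
  have hlast : partialSum ([w - 1].filter (fun p => decide (0 < p))) (j - l.length) =
      min (j - l.length) 1 * (w - 1) := by
    by_cases hw1 : 0 < w - 1
    · simp [hw1, partialSum_singleton]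
    · simp [show w - 1 = 0 by omega, partialSum]
  have := partialSum_le_sum l j
  simp only [dminus, List.dropLast_concat, List.getLastD_concat, List.filter_append, hl',
    partialSum_append, hlast, partialSum_singleton, List.sum_append, List.sum_singleton]
  rcases Nat.lt_or_ge l.length j with hj | hj
  · rw [partialSum_of_length_le hj.le, Nat.min_eq_right (by omega)]; simp; omega
  · simp [Nat.sub_eq_zero_of_le hj]; omega

lemma partialSum_dminus_le (hl : ∀ x ∈ l, 0 < x) (j : ℕ) :
    partialSum (dminus l) j ≤ partialSum l j :=
  (partialSum_dminus hl j).trans_le (min_le_left _ _)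

lemma IsPartition.dminus {N : ℕ} (hl : IsPartition N l) : IsPartition (N - 1) (dminus l) := by
  obtain ⟨hs, hp, rfl⟩ := hl
  refine ⟨?_, fun x hx => by simpa using (List.mem_filter.mp hx).2, ?_⟩
  · rcases eq_or_ne l [] with rfl | hne
    · simp [_root_.dminus]
    rw [← List.dropLast_append_getLast hne] at hs
    have hgl : l.getLastD 0 = l.getLast hne := by
      rw [List.getLastD_eq_getLast?, List.getLast?_eq_some_getLast hne]; rfl
    rw [_root_.dminus, hgl]
    refine List.Pairwise.filter _ (List.pairwise_append.mpr ⟨(List.pairwise_append.mp hs).1,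
      by simp, fun x hx y hy => ?_⟩)
    rw [List.eq_of_mem_singleton hy]
    exact (List.pairwise_append.mp hs).2.2 x hx _ (List.mem_singleton_self _) |>.trans' (by omega)
  · have hj : (_root_.dminus l).length ≤ (_root_.dminus l).length + l.length := by omega
    have := partialSum_dminus hp ((_root_.dminus l).length + l.length)
    rwa [partialSum_of_length_le hj, partialSum_of_length_le (by omega),
      min_eq_right (Nat.sub_le _ _)] at this

end DplusDminus

section Collapse

variable {ε N : ℕ} {l c d e : List ℕ}

lemma IsCollapse.eq_of_dom (hc : IsCollapse ε N l c) (hd : IsPartition N d) (hdε : PEps ε d)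
    (hdl : Dom d l) (hcd : Dom c d) : c = d :=
  dom_antisymm hc.1.2.1 hd.2.1 hcd (hc.2.2.2 d hd hdε hdl)

lemma ne_nil_of_isCollapse_dplus (h : IsCollapse ε (N + 1) (dplus l) c) : l ≠ [] := by
  rintro rfl
  have hc : partialSum c c.length ≤ partialSum (dplus []) c.length := h.2.2.1 _
  rw [partialSum_of_length_le le_rfl, h.1.2.2] at hc
  simp [dplus, partialSum] at hc

lemma dom_dplus_of_isCollapse_dminus (hd : IsPartition (N + 1) d) (hN : Even N)
    (he : IsCollapse 1 N (dminus d) e) (he_ne : e ≠ []) : Dom d (dplus e) := by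
  have hdm : IsPartition N (dminus d) := by simpa using hd.dminus
  obtain ⟨ν, hνpart, hνε, hνbound, -, hνlen⟩ :=
    exists_approxPEps 1 hdm.1 hdm.2.1 (Nat.zero_le 1) fun _ => by rwa [hdm.2.2]
  rw [hdm.2.2, Nat.add_zero] at hνpart
  have hνe : Dom ν e := he.2.2.2 ν hνpart hνε fun j => (hνbound j).1
  intro j
  rcases j.eq_zero_or_pos with rfl | hj
  · simp
  change partialSum d j ≤ partialSum (dplus e) j
  rw [partialSum_dplus he_ne hj]
  have hνe_j := hνe j
  have hνbound_j := (hνbound j).2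
  have hdm_j := partialSum_dminus hd.2.1 j
  rw [hd.2.2, Nat.add_sub_cancel] at hdm_j
  by_cases hjd : partialSum d j ≤ N
  · change partialSum ν j ≤ partialSum e j at hνe_j
    omega
  · have hj_len : (dminus d).length ≤ j := not_lt.mp fun h => by
      have := partialSum_lt_sum hdm.2.1 h
      have := hdm.2.2
      omega
    have := partialSum_of_length_le ((hνlen rfl).trans hj_len)
    have := partialSum_le_sum d j
    have := hνpart.2.2
    have := hd.2.2
    change partialSum ν j ≤ partialSum e j at hνe_j
    omega

lemma dom_dminus_of_isCollapse_dplus (hd : IsPartition N d) (hN : ε % 2 = 1 → Even (N + 1))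
    (he : IsCollapse ε (N + 1) (dplus d) e) : Dom d (dminus e) := by
  have hd_ne := ne_nil_of_isCollapse_dplus he
  obtain ⟨ν, hνpart, hνε, hνbound, -⟩ :=
    exists_approxPEps ε hd.1 hd.2.1 le_rfl fun hε => by rw [hd.2.2]; exact hN hε
  rw [hd.2.2] at hνpart
  have hνe : Dom ν e := he.2.2.2 ν hνpart hνε fun j => by
    rcases j.eq_zero_or_pos with rfl | hj
    · simp
    change partialSum ν j ≤ partialSum (dplus d) j
    rw [partialSum_dplus hd_ne hj]
    exact (hνbound j).1
  intro j
  change partialSum d j ≤ partialSum (dminus e) j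
  rw [partialSum_dminus he.1.2.1, he.1.2.2, Nat.add_sub_cancel]
  have := (hνbound j).2
  have : partialSum ν j ≤ partialSum e j := hνe j
  have := partialSum_le_sum d j
  rw [hd.2.2] at this
  omega

end Collapse

section Chain

variable {ε δ N : ℕ} {d e m : List ℕ}

/-- Along a run `d_i = d_{i+1} = …` the partial sums of `e` cannot stay `δ` above those of `d`
forever: the parity of `S_e(k) + (ε + 1) k` forbids `e` to drop, and `d` eventually drops. -/
lemma false_of_tracking (hd : d.Pairwise (· ≥ ·)) (he : e.Pairwise (· ≥ ·)) (heε : PEps ε e)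
    (hde : ∀ j, partialSum e j ≤ partialSum d j + δ) {i : ℕ} (hv : 0 < d.getD i 0)
    (hvε : Even (d.getD i 0 + (ε + 1)))
    (hstart : partialSum e (i + 1) = partialSum d (i + 1) + δ)
    (hodd : Odd (partialSum e (i + 1) + (ε + 1) * (i + 1))) : False := by
  set v := d.getD i 0
  have hev : v ≤ e.getD i 0 := by
    have := hde i; have := partialSum_succ e i; have := partialSum_succ d i; omega
  have key : ∀ t, partialSum e (i + t + 1) = partialSum d (i + t + 1) + δ ∧
      d.getD (i + t) 0 = v ∧ v ≤ e.getD (i + t) 0 ∧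
      Odd (partialSum e (i + t + 1) + (ε + 1) * (i + t + 1)) := by
    intro t
    induction t with
    | zero => exact ⟨hstart, rfl, hev, hodd⟩
    | succ t ih =>
      obtain ⟨hS, hdv, hev, hpar⟩ := ih
      rw [← Nat.add_assoc]
      set k := i + t
      have he_flat : e.getD k 0 ≤ e.getD (k + 1) 0 := not_lt.mp fun hlt =>
        Nat.not_even_iff_odd.mpr hpar (heε.even_partialSum_of_getD_lt he hlt)
      have hd_le : d.getD (k + 1) 0 ≤ v := hdv ▸ getD_antitone hd (Nat.le_succ k)
      have := hde (k + 1 + 1); have := partialSum_succ e (k + 1); have := partialSum_succ d (k + 1)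
      have hS' : partialSum e (k + 1 + 1) = partialSum d (k + 1 + 1) + δ := by omega
      refine ⟨hS', by omega, by omega, ?_⟩
      have hstep : partialSum e (k + 1 + 1) + (ε + 1) * (k + 1 + 1) =
          partialSum e (k + 1) + (ε + 1) * (k + 1) + (v + (ε + 1)) := by
        have : (ε + 1) * (k + 1 + 1) = (ε + 1) * (k + 1) + (ε + 1) := by ring
        omega
      rw [hstep]
      exact hpar.add_even hvε
  obtain ⟨-, hdv, -⟩ := key d.length
  rw [List.getD_eq_default _ _ (by omega)] at hdv
  omega

theorem partialSum_le_of_chain (hε : ε ≤ 1) (hd : IsPartition N d)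
    (hdε : PEpsEps ε (1 - ε) d) (he : e.Pairwise (· ≥ ·)) (heε : PEps (1 - ε) e)
    (hm : IsPartition N m) (hmε : PEps ε m)
    (hde : ∀ j, partialSum e j ≤ partialSum d j + ε)
    (hem : ∀ j, partialSum m j + ε ≤ partialSum e j + 1) (j : ℕ) :
    partialSum m j ≤ partialSum d j := by
  induction j with
  | zero => simp
  | succ i ih =>
    by_contra hlt
    set v := d.getD i 0 with hv_def
    have hSm : partialSum m (i + 1) = partialSum d (i + 1) + 1 := by
      have := hde (i + 1); have := hem (i + 1); omega
    have hSe : partialSum e (i + 1) = partialSum d (i + 1) + ε := by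
      have := hde (i + 1); have := hem (i + 1); omega
    have hmv : v + 1 ≤ m.getD i 0 := by
      have := partialSum_succ m i; have := partialSum_succ d i; omega
    have hv : 0 < v := by
      by_contra hv0
      have hi : d.length ≤ i := not_lt.mp fun h => hv0 ((getD_pos_iff hd.2.1).mpr h)
      have := partialSum_of_length_le (l := d) (j := i + 1) (by omega)
      have := partialSum_le_sum m (i + 1); have := hd.2.2; have := hm.2.2
      omega
    have hm_drop : m.getD (i + 1) 0 < m.getD i 0 := by
      by_contra hge
      have := getD_antitone hd.1 (Nat.le_add_right i 1)
      have := hde (i + 1 + 1); have := hem (i + 1 + 1)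
      have := partialSum_succ m (i + 1); have := partialSum_succ d (i + 1)
      omega
    have hm_even := Nat.even_iff.mp (hmε.even_partialSum_of_getD_lt hm.1 hm_drop)
    obtain ⟨hvε, hrun_odd⟩ := hdε.1.parity_of_odd_partialSum hd.1 hv
      (Nat.odd_iff.mpr (by omega))
    rw [← hv_def] at hvε hrun_odd
    have hv_mem : v ∈ d := getD_mem_of_pos hv
    have hcount := Nat.even_iff.mp (hdε.1 v hv_mem hvε)
    have hheight := hdε.2 v hvε (Or.inr hv_mem)
    rw [height_eq_count_add] at hheight
    rw [Nat.odd_iff] at hrun_odd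
    refine false_of_tracking (δ := ε) hd.1 he heε hde hv (Nat.even_iff.mpr (by omega)) hSe ?_
    rw [Nat.odd_iff]
    rcases Nat.le_one_iff_eq_zero_or_eq_one.mp hε with rfl | rfl <;> simp at hm_even ⊢ <;> omega

end Chain

/-- The maps `f_BC : P^sp_B(2n+1) → P^sp_C(2n)`, `d ↦ (d⁻)_C`, and
`f_CB : P^sp_C(2n) → P^sp_B(2n+1)`, `d ↦ (d⁺)_B`, are mutually inverse bijections. -/
theorem fBC_fCB_inverse (n : ℕ) :
    (∀ d e f : List ℕ, IsPartition (2 * n + 1) d → PEpsEps 0 1 d →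
      IsCollapse 1 (2 * n) (dminus d) e →
      IsCollapse 0 (2 * n + 1) (dplus e) f → f = d) ∧
    (∀ d e f : List ℕ, IsPartition (2 * n) d → PEpsEps 1 0 d →
      IsCollapse 0 (2 * n + 1) (dplus d) e →
      IsCollapse 1 (2 * n) (dminus e) f → f = d) := by
  refine ⟨fun d e f hd hsp he hf => ?_, fun d e f hd hsp he hf => ?_⟩
  · have he_ne := ne_nil_of_isCollapse_dplus hf
    refine hf.eq_of_dom hd hsp.1 (dom_dplus_of_isCollapse_dminus hd (even_two_mul n) he he_ne)
      (partialSum_le_of_chain (ε := 0) zero_le_one hd hsp he.1.1 he.2.1 hf.1 hf.2.1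
        (fun j => (he.2.2.1 j).trans (partialSum_dminus_le hd.2.1 j))
        (fun j => (hf.2.2.1 j).trans (partialSum_dplus_le e j)))
  · refine hf.eq_of_dom hd hsp.1 (dom_dminus_of_isCollapse_dplus hd (by simp) he)
      (partialSum_le_of_chain (ε := 1) le_rfl hd hsp he.1.1 he.2.1 hf.1 hf.2.1
        (fun j => (he.2.2.1 j).trans (partialSum_dplus_le d j))
        (fun j => Nat.add_le_add_right ((hf.2.2.1 j).trans (partialSum_dminus_le he.1.2.1 j)) 1))
end

section
/- Let d be a partition of 2n lying in P_1(2n) (every odd part of d occurs with even multiplicity). Then d ∈ P_{1,1}(2n), i.e. h_d(s) is odd for every odd part s of d, if and only if the transpose partition d^t lies in P_0(2n), i.e. every even part of d^t occurs with even multiplicity. -/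
/-- The transpose partition: its `i`-th part is `#{j : d_j ≥ i}`. -/
def transposeP (l : List ℕ) : List ℕ :=
  (List.range (l.headD 0)).map (fun i => height l (i + 1))

/-!
Read the Young diagram of `d` through its height function `f = h_d` and that of its transpose
`g = h_{dᵗ}`. The parts of `d` are the drops of `f`, the parts of `dᵗ` the drops of `g`, and a
part `s` of `d` is matched with the part `v = f s` of `dᵗ` (a corner of the diagram, with
`g v = s`). The multiplicity of `s` in `d` is `f s - f (s + 1)`, where `f (s + 1)` is the
preceding corner's part of `dᵗ`; the multiplicity of `v` in `dᵗ` is `g v - g (v + 1)`, where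
`g (v + 1)` is the next corner's part of `d`. Both conditions thus become parity statements about
consecutive corners: a corner `(s, v)` with `s` odd and `v` even forces the next corner to be of
the same kind, which cannot go on forever.
-/

open Finset

/-- The parts of a partition are exactly the drops of its height function. -/
def IsDrop (f : ℕ → ℕ) (s : ℕ) : Prop :=
  1 ≤ s ∧ f (s + 1) < f s

/-- `(j, v)` is a cell of the Young diagram of `d` iff either side of the equivalence holds,
for `f = height d` and `g = height (transposeP d)`. -/
def IsConjugate (f g : ℕ → ℕ) : Prop :=
  ∀ j v, 1 ≤ j → 1 ≤ v → (j ≤ g v ↔ v ≤ f j)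

namespace IsConjugate

variable {f g : ℕ → ℕ}

theorem symm (h : IsConjugate f g) : IsConjugate g f :=
  fun j v hj hv => (h v j hv hj).symm

theorem isDrop_apply {s : ℕ} (h : IsConjugate f g) (hs : IsDrop f s) :
    IsDrop g (f s) ∧ g (f s) = s := by
  obtain ⟨hs1, hdrop⟩ := hs
  have hle : s ≤ g (f s) := (h s (f s) hs1 (by omega)).mpr le_rfl
  have hge : ¬ s + 1 ≤ g (f s) := fun hlt => by
    have := (h (s + 1) (f s) (by omega) (by omega)).mp hlt
    omega
  have hnext : ¬ s ≤ g (f s + 1) := fun hle' => by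
    have := (h s (f s + 1) hs1 (by omega)).mp hle'
    omega
  exact ⟨⟨by omega, by omega⟩, by omega⟩

/-- The corner following the corner `(g v, v)`. -/
theorem isDrop_apply_succ {v : ℕ} (h : IsConjugate f g) (hv : IsDrop g v)
    (hnext : 1 ≤ g (v + 1)) : IsDrop f (g (v + 1)) ∧ f (g (v + 1) + 1) = v := by
  obtain ⟨hv1, hdrop⟩ := hv
  have hfirst : v + 1 ≤ f (g (v + 1)) := (h _ _ hnext (by omega)).mp le_rfl
  have hbelow : ¬ v + 1 ≤ f (g (v + 1) + 1) := fun hle => by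
    have := (h _ _ (by omega) (by omega)).mpr hle
    omega
  have habove : v ≤ f (g (v + 1) + 1) := (h _ _ (by omega) hv1).mp (by omega)
  exact ⟨⟨hnext, by omega⟩, by omega⟩

theorem odd_at_odd_drops_iff (h : IsConjugate f g)
    (hf : ∀ s, IsDrop f s → s % 2 = 1 → f s % 2 = f (s + 1) % 2) :
    (∀ s, IsDrop f s → s % 2 = 1 → f s % 2 = 1) ↔
      ∀ v, IsDrop g v → v % 2 = 0 → g v % 2 = g (v + 1) % 2 := by
  constructor
  · intro hodd v hv hveven
    obtain ⟨hcorner, hgv⟩ := h.symm.isDrop_apply hv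
    have hs : g v % 2 = 0 := by
      by_contra hs
      have := hodd _ hcorner (by omega)
      omega
    rcases Nat.eq_zero_or_pos (g (v + 1)) with hlast | hnext
    · omega
    obtain ⟨htdrop, hft⟩ := h.isDrop_apply_succ hv hnext
    have ht : g (v + 1) % 2 = 0 := by
      by_contra ht
      have h1 := hodd _ htdrop (by omega)
      have h2 := hf _ htdrop (by omega)
      omega
    omega
  · intro heven s
    induction s using Nat.strong_induction_on with
    | _ s ih =>
    intro hs hsodd
    by_contra hv
    obtain ⟨hvdrop, hgv⟩ := h.isDrop_apply hs
    have hpar := heven _ hvdrop (by omega)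
    rw [hgv] at hpar
    have hnext : 1 ≤ g (f s + 1) := by omega
    obtain ⟨htdrop, hft⟩ := h.isDrop_apply_succ hvdrop hnext
    have h1 := ih _ (lt_of_lt_of_eq hvdrop.2 hgv) htdrop (by omega)
    have h2 := hf _ htdrop (by omega)
    omega

end IsConjugate

theorem height_eq_count_add_height_succ (l : List ℕ) (s : ℕ) :
    height l s = l.count s + height l (s + 1) := by
  induction l with
  | nil => rfl
  | cons p t ih =>
    simp only [height, List.filter_cons, List.count_cons] at *
    split_ifs <;> simp_all <;> omega

theorem height_antitone (l : List ℕ) : Antitone (height l) := fun _ _ hst =>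
  List.Sublist.length_le (List.monotone_filter_right _ fun _ h => by
    simp only [decide_eq_true_eq] at h ⊢; omega)

theorem isDrop_height_iff_mem {l : List ℕ} (hpos : ∀ p ∈ l, 0 < p) (s : ℕ) :
    IsDrop (height l) s ↔ s ∈ l := by
  have hcount := height_eq_count_add_height_succ l s
  rw [IsDrop, ← List.count_pos_iff]
  constructor
  · omega
  · intro h
    have := hpos s (List.count_pos_iff.mp h)
    omega

theorem pEps_iff_height {l : List ℕ} (hpos : ∀ p ∈ l, 0 < p) (e : ℕ) :
    PEps e l ↔ ∀ s, IsDrop (height l) s → s % 2 = e % 2 →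
      height l s % 2 = height l (s + 1) % 2 := by
  simp only [PEps, isDrop_height_iff_mem hpos, Nat.even_iff]
  refine forall₂_congr fun s _ => imp_congr_right fun _ => ?_
  have := height_eq_count_add_height_succ l s
  omega

theorem height_pos_iff_le_headD {d : List ℕ} (hsort : d.Pairwise (· ≥ ·)) {s : ℕ} (hs : 1 ≤ s) :
    0 < height d s ↔ s ≤ d.headD 0 := by
  cases d with
  | nil => simp only [height, List.filter_nil, List.length_nil, List.headD_nil]; omega
  | cons a t =>
    simp only [height, List.length_pos_iff, ne_eq, List.filter_eq_nil_iff, not_forall,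
      decide_eq_true_eq, List.headD_cons, List.mem_cons, exists_prop, exists_eq_or_imp,
      not_not]
    refine ⟨?_, Or.inl⟩
    rintro (h | ⟨p, hp, hsp⟩)
    · exact h
    · exact hsp.trans (List.rel_of_pairwise_cons hsort hp)

theorem height_transposeP (d : List ℕ) (v : ℕ) :
    height (transposeP d) v = #{i ∈ range (d.headD 0) | v ≤ height d (i + 1)} := by
  simp only [height, transposeP, List.filter_map, List.length_map]
  simp [Finset.card, Finset.filter, Finset.range, Multiset.range, Function.comp_def]

theorem pos_of_mem_transposeP {d : List ℕ} (hsort : d.Pairwise (· ≥ ·)) :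
    ∀ v ∈ transposeP d, 0 < v := by
  simp only [transposeP, List.mem_map, List.mem_range]
  rintro _ ⟨i, hi, rfl⟩
  exact (height_pos_iff_le_headD hsort (by omega)).mpr hi

theorem isConjugate_height_transposeP {d : List ℕ} (hsort : d.Pairwise (· ≥ ·)) :
    IsConjugate (height d) (height (transposeP d)) := by
  intro j v hj hv
  rw [height_transposeP]
  constructor
  · intro hcard
    by_contra hlt
    have hsub : {i ∈ range (d.headD 0) | v ≤ height d (i + 1)} ⊆ range (j - 1) := by
      intro i hi
      simp only [mem_filter, mem_range] at hi ⊢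
      by_contra hji
      have := height_antitone d (show j ≤ i + 1 by omega)
      omega
    have := card_le_card hsub
    simp only [card_range] at this
    omega
  · intro hvj
    have hjL : j ≤ d.headD 0 := (height_pos_iff_le_headD hsort hj).mp (by omega)
    have hsub : range j ⊆ {i ∈ range (d.headD 0) | v ≤ height d (i + 1)} := by
      intro i hi
      simp only [mem_filter, mem_range] at hi ⊢
      exact ⟨by omega, hvj.trans (height_antitone d (by omega))⟩
    simpa using card_le_card hsub

/-- For a partition `d` of `2n` lying in `P_1(2n)`: `d ∈ P_{1,1}(2n)`, i.e. `h_d(s)` is odd for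
every odd part `s` of `d`, if and only if the transpose partition `dᵗ` lies in `P_0(2n)`,
i.e. every even part of `dᵗ` occurs with even multiplicity. -/
theorem metaplectic_iff_transpose_typeD (n : ℕ) (d : List ℕ)
    (hd : IsPartition (2 * n) d) (hd1 : PEps 1 d) :
    (∀ s ∈ d, s % 2 = 1 → height d s % 2 = 1) ↔ PEps 0 (transposeP d) := by
  obtain ⟨hsort, hpos, -⟩ := hd
  rw [pEps_iff_height hpos] at hd1
  rw [pEps_iff_height (pos_of_mem_transposeP hsort),
    ← (isConjugate_height_transposeP hsort).odd_at_odd_drops_iff hd1]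
  simp only [isDrop_height_iff_mem hpos]
end
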